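/- arXiv:2505.00110 — 4 statements merged into one kernel-verified Lean document; each statement's English description precedes it below -/
import Mathlib

section
/- For any x = (x_1,…,x_d) ∈ ℝ^d, the parity function f₀(x) = ∏_{i=1}^d (2·𝟙(x_i ≥ 0) − 1) satisfies f₀(x) = (−1)^d + 2 Σ_{k=1}^d (−1)^{k+d} · 𝟙( (Σ_{i=1}^d 𝟙(x_i ≥ 0)) − k ≥ 0 ). -/
/-! Both sides depend only on the number `N` of nonnegative coordinates: the product is
`(-1) ^ (d - N)`, and since `heaviside (N - k) = 1` exactly when `k ≤ N`, the right-hand side is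
`(-1) ^ d` times `1 + 2 * ∑ k ∈ Icc 1 N, (-1) ^ k = (-1) ^ N`. -/

noncomputable def heaviside (t : ℝ) : ℝ := if 0 ≤ t then 1 else 0

open Finset

lemma heaviside_natCast_sub_natCast (n k : ℕ) :
    heaviside ((n : ℝ) - k) = if k ≤ n then 1 else 0 := by
  simp [heaviside, sub_nonneg]

lemma two_mul_heaviside_sub_one (t : ℝ) :
    2 * heaviside t - 1 = if 0 ≤ t then 1 else -1 := by
  unfold heaviside
  split_ifs <;> norm_num

section

variable {ι : Type*} [Fintype ι] (x : ι → ℝ)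

lemma sum_heaviside_eq_card : ∑ i, heaviside (x i) = #{i | 0 ≤ x i} := by
  simp [heaviside, sum_boole]

lemma prod_two_mul_heaviside_sub_one :
    ∏ i, (2 * heaviside (x i) - 1) = (-1) ^ #{i | x i < 0} := by
  simp_rw [two_mul_heaviside_sub_one, prod_ite, prod_const, one_pow, one_mul, not_le]

lemma card_nonneg_add_card_neg : #{i | 0 ≤ x i} + #{i | x i < 0} = Fintype.card ι := by
  simp_rw [← not_le]
  exact card_filter_add_card_filter_not _

end

lemma Finset.Icc_filter_le_of_le_right {α : Type*} [Preorder α] [LocallyFiniteOrder α]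
    {a b c : α} [DecidablePred (· ≤ c)] (hcb : c ≤ b) :
    {x ∈ Icc a b | x ≤ c} = Icc a c := by
  ext x
  simp only [mem_filter, mem_Icc]
  exact ⟨fun h => ⟨h.1.1, h.2⟩, fun h => ⟨⟨h.1, h.2.trans hcb⟩, h.2⟩⟩

lemma one_add_two_mul_sum_Icc_neg_one_pow {R : Type*} [Ring R] (n : ℕ) :
    1 + 2 * ∑ k ∈ Icc 1 n, (-1 : R) ^ k = (-1) ^ n := by
  induction n with
  | zero => simp
  | succ n ih =>
    rw [sum_Icc_succ_top (by omega), mul_add, ← add_assoc, ih, pow_succ]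
    noncomm_ring

/-- The parity function as a two-hidden-layer Heaviside network. -/
theorem parity_heaviside_representation (d : ℕ) (x : Fin d → ℝ) :
    (∏ i, (2 * heaviside (x i) - 1)) =
      (-1 : ℝ) ^ d +
        2 * ∑ k ∈ Finset.Icc 1 d,
          (-1 : ℝ) ^ (k + d) * heaviside ((∑ i, heaviside (x i)) - k) := by
  set N := #{i | 0 ≤ x i}
  have hsplit : N + #{i | x i < 0} = d := by simpa using card_nonneg_add_card_neg x
  have hN : N ≤ d := by omega
  rw [prod_two_mul_heaviside_sub_one]
  calc (-1 : ℝ) ^ #{i | x i < 0}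
      = (-1) ^ (N + (N + #{i | x i < 0})) := by
        rw [← add_assoc, ← two_mul, pow_add, pow_mul, neg_one_sq, one_pow, one_mul]
    _ = (-1) ^ d * (1 + 2 * ∑ k ∈ Icc 1 N, (-1 : ℝ) ^ k) := by
        rw [hsplit, one_add_two_mul_sum_Icc_neg_one_pow, pow_add, mul_comm]
    _ = (-1) ^ d + 2 * ∑ k ∈ Icc 1 N, (-1 : ℝ) ^ (k + d) := by
        simp_rw [mul_add, mul_one, mul_left_comm _ (2 : ℝ), mul_sum, ← pow_add, add_comm d]
    _ = _ := by
        rw [sum_heaviside_eq_card, ← Icc_filter_le_of_le_right hN, sum_filter]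
        simp_rw [heaviside_natCast_sub_natCast, mul_ite, mul_one, mul_zero]
        rfl
end

section
/- Let m ≥ 1 be an integer and f₀ : [0,1] → ℝ be continuous. For every piecewise constant function f : [0,1] → ℝ with at most m pieces, sup_{t ∈ [0,1]} |f(t) − f₀(t)| ≥ (sup_{t ∈ [0,1]} f₀(t) − inf_{t ∈ [0,1]} f₀(t)) / (2m). -/
/-! Write `S` for the uniform distance between `f` and `f₀`. By the intermediate value theorem
`f₀` takes every value between its infimum and its supremum; at a point where it does, `f` is one
of the constants `cᵢ`, so that value lies within `S` of some `cᵢ`. Hence the interval from the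
infimum to the supremum of `f₀` is covered by `m` intervals of length `2S`, and comparing Lebesgue
measures gives `sup f₀ - inf f₀ ≤ 2mS`. -/

open Set MeasureTheory

theorem sum_mul_indicator_one_eq_of_mem {α ι R : Type*} [Fintype ι] [NonAssocSemiring R]
    {A : ι → Set α} (hA : Pairwise fun i j => Disjoint (A i) (A j)) (c : ι → R) {i : ι} {x : α}
    (hx : x ∈ A i) : ∑ j, c j * (A j).indicator (fun _ => (1 : R)) x = c i := by
  rw [Finset.sum_eq_single i]
  · rw [indicator_of_mem hx, mul_one]
  · intro j _ hji
    rw [indicator_of_notMem fun hxj => (hA hji).ne_of_mem hxj hx rfl, mul_zero]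
  · simp

theorem sub_le_card_mul_of_Icc_subset_iUnion_Icc {ι : Type*} [Fintype ι] {a b r : ℝ}
    {c : ι → ℝ} (hr : 0 ≤ r) (h : Icc a b ⊆ ⋃ i, Icc (c i - r) (c i + r)) :
    b - a ≤ Fintype.card ι * (2 * r) := by
  have hvol : volume (Icc a b) ≤ ∑ i, volume (Icc (c i - r) (c i + r)) :=
    (measure_mono h).trans (measure_iUnion_fintype_le _ _)
  simp only [Real.volume_Icc, add_sub_sub_cancel, ← two_mul, Finset.sum_const,
    Finset.card_univ, nsmul_eq_mul] at hvol
  rw [← ENNReal.ofReal_natCast, ← ENNReal.ofReal_mul (Nat.cast_nonneg _),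
    ENNReal.ofReal_le_ofReal_iff (by positivity)] at hvol
  exact hvol

theorem bddAbove_range_abs_sub_of_forall_exists_eq {X ι : Type*} [TopologicalSpace X] [Finite ι]
    {K : Set X} (hK : IsCompact K) {f₀ : X → ℝ} (hf₀ : ContinuousOn f₀ K) {f : X → ℝ}
    {c : ι → ℝ} (hfc : ∀ x ∈ K, ∃ i, f x = c i) :
    BddAbove (range fun x : K => |f x - f₀ x|) := by
  obtain ⟨C, hC⟩ := hK.exists_bound_of_continuousOn hf₀
  obtain ⟨B, hB⟩ := (finite_range fun i => |c i|).bddAbove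
  refine ⟨B + C, forall_mem_range.2 fun ⟨x, hx⟩ => ?_⟩
  obtain ⟨i, hi⟩ := hfc x hx
  calc |f x - f₀ x| ≤ |f x| + ‖f₀ x‖ := abs_sub _ _
    _ ≤ B + C := add_le_add (hi ▸ hB (mem_range_self i)) (hC x hx)

theorem sSup_image_sub_sInf_image_le_of_forall_abs_sub_le {X ι : Type*} [TopologicalSpace X]
    [Fintype ι] {K : Set X} (hK : IsCompact K) (hKc : IsConnected K) {f₀ : X → ℝ}
    (hf₀ : ContinuousOn f₀ K) {f : X → ℝ} {c : ι → ℝ} (hfc : ∀ x ∈ K, ∃ i, f x = c i) {S : ℝ}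
    (hS : ∀ x ∈ K, |f x - f₀ x| ≤ S) :
    sSup (f₀ '' K) - sInf (f₀ '' K) ≤ Fintype.card ι * (2 * S) := by
  obtain ⟨x₀, hx₀⟩ := hKc.nonempty
  refine sub_le_card_mul_of_Icc_subset_iUnion_Icc (c := c) ((abs_nonneg _).trans (hS x₀ hx₀)) ?_
  rw [← eq_Icc_of_connected_compact (hKc.image f₀ hf₀) (hK.image_of_continuousOn hf₀)]
  rintro _ ⟨x, hx, rfl⟩
  obtain ⟨i, hi⟩ := hfc x hx
  have hdist := hS x hx
  rw [hi, abs_sub_le_iff] at hdist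
  exact mem_iUnion.2 ⟨i, by constructor <;> linarith⟩

theorem piecewise_constant_approx_lower_bound_general (m : ℕ) (f f₀ : ℝ → ℝ)
    (hcont : ContinuousOn f₀ (Set.Icc 0 1))
    (hf : ∃ (A : Fin m → Set ℝ) (c : Fin m → ℝ),
      (∀ i, (A i).OrdConnected) ∧
      (Pairwise fun i j => Disjoint (A i) (A j)) ∧
      (⋃ i, A i) = Set.Icc (0 : ℝ) 1 ∧
      ∀ x ∈ Set.Icc (0 : ℝ) 1, f x = ∑ i, c i * Set.indicator (A i) (fun _ => (1 : ℝ)) x) :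
    ((⨆ t : Set.Icc (0 : ℝ) 1, f₀ t) - ⨅ t : Set.Icc (0 : ℝ) 1, f₀ t) / (2 * m) ≤
      ⨆ t : Set.Icc (0 : ℝ) 1, |f t - f₀ t| := by
  obtain ⟨A, c, -, hdisj, hcover, hsum⟩ := hf
  have hfc : ∀ x ∈ Icc (0 : ℝ) 1, ∃ i, f x = c i := fun x hx =>
    let ⟨i, hi⟩ := mem_iUnion.1 (hcover ▸ hx)
    ⟨i, (hsum x hx).trans (sum_mul_indicator_one_eq_of_mem hdisj c hi)⟩
  have hbdd := bddAbove_range_abs_sub_of_forall_exists_eq isCompact_Icc hcont hfc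
  have hosc := sSup_image_sub_sInf_image_le_of_forall_abs_sub_le isCompact_Icc
    (isConnected_Icc zero_le_one) hcont hfc fun x hx => le_ciSup hbdd ⟨x, hx⟩
  rw [Fintype.card_fin, image_eq_range] at hosc
  exact div_le_of_le_mul₀ (by positivity) (Real.iSup_nonneg fun _ => abs_nonneg _)
    (by rw [iSup, iInf]; linarith)

/-- Lower bound for approximating a continuous function on `[0,1]` by piecewise
constant functions with at most `m` pieces. -/
theorem piecewise_constant_approx_lower_bound (m : ℕ) (hm : 1 ≤ m) (f f₀ : ℝ → ℝ)
    (hcont : ContinuousOn f₀ (Set.Icc 0 1))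
    (hf : ∃ (A : Fin m → Set ℝ) (c : Fin m → ℝ),
      (∀ i, (A i).OrdConnected) ∧
      (Pairwise fun i j => Disjoint (A i) (A j)) ∧
      (⋃ i, A i) = Set.Icc (0 : ℝ) 1 ∧
      ∀ x ∈ Set.Icc (0 : ℝ) 1, f x = ∑ i, c i * Set.indicator (A i) (fun _ => (1 : ℝ)) x) :
    ((⨆ t : Set.Icc (0 : ℝ) 1, f₀ t) - ⨅ t : Set.Icc (0 : ℝ) 1, f₀ t) / (2 * m) ≤
      ⨆ t : Set.Icc (0 : ℝ) 1, |f t - f₀ t| :=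
  piecewise_constant_approx_lower_bound_general m f f₀ hcont hf
end

section
/- Let d ≥ 1, L ≥ 1, and let f be any function computed by a deep Heaviside network with L hidden layers and width vector (d, p_1, …, p_L, 1). Then for any x₁, x₂ ∈ [0,1]^d, the restriction t ↦ f((1−t)x₁ + t x₂) on [0,1] is a piecewise constant function with at most p₁ + 1 pieces, where p₁ is the width of the first hidden layer. -/
/-- Hidden-layer functions of a deep Heaviside network with widths `p`,
weight matrices `W` and shift vectors `b`. -/
noncomputable def dhnHidden (p : ℕ → ℕ)
    (W : ∀ ℓ : ℕ, Matrix (Fin (p (ℓ + 1))) (Fin (p ℓ)) ℝ)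
    (b : ∀ ℓ : ℕ, Fin (p (ℓ + 1)) → ℝ) :
    (ℓ : ℕ) → (Fin (p 0) → ℝ) → Fin (p ℓ) → ℝ
  | 0, x => x
  | (ℓ + 1), x => fun j => heaviside ((W ℓ).mulVec (dhnHidden p W b ℓ x) j - b ℓ j)

/-- `g : ℝ → ℝ` is piecewise constant on `[0,1]` with at most `m` pieces. -/
def PiecewiseConstOn (g : ℝ → ℝ) (m : ℕ) : Prop :=
  ∃ A : Fin m → Set ℝ,
    (∀ i, (A i).OrdConnected) ∧
    (Pairwise fun i j => Disjoint (A i) (A j)) ∧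
    (⋃ i, A i) = Set.Icc (0 : ℝ) 1 ∧
    ∀ i, ∀ x ∈ A i, ∀ y ∈ A i, g x = g y

/-! Along the segment, the `j`-th first-layer unit is `heaviside (β j + t * α j)`, which switches at
most once. Flipping the units with `α j < 0` makes every unit monotone in `t`, so the number `S t` of
switched units is a monotone function `ℝ → {0, …, p 1}`. Equal values of `S` at two parameters force
every unit to agree there, hence the whole network, so the level sets of `S` on `[0,1]` are the at most
`p 1 + 1` pieces. -/

open Matrix

lemma PiecewiseConstOn.of_monotoneOn {g : ℝ → ℝ} {m : ℕ} (S : ℝ → ℕ)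
    (hS : MonotoneOn S (Set.Icc 0 1)) (hSle : ∀ t ∈ Set.Icc (0 : ℝ) 1, S t ≤ m)
    (hg : ∀ t ∈ Set.Icc (0 : ℝ) 1, ∀ s ∈ Set.Icc (0 : ℝ) 1, S t = S s → g t = g s) :
    PiecewiseConstOn g (m + 1) := by
  refine ⟨fun i => {t | t ∈ Set.Icc (0 : ℝ) 1 ∧ S t = i}, fun i => ⟨?_⟩, ?_, ?_, ?_⟩
  · rintro x ⟨hx, hxi⟩ y ⟨hy, hyi⟩ z hz
    have hz' : z ∈ Set.Icc (0 : ℝ) 1 := ⟨hx.1.trans hz.1, hz.2.trans hy.2⟩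
    exact ⟨hz', le_antisymm (hyi ▸ hS hz' hy hz.2) (hxi ▸ hS hx hz' hz.1)⟩
  · intro i j hij
    exact Set.disjoint_left.2 fun t hi hj => hij (Fin.ext (hi.2.symm.trans hj.2))
  · ext t
    simp only [Set.mem_iUnion, Set.mem_ofPred_eq]
    exact ⟨fun ⟨_, ht, _⟩ => ht, fun ht => ⟨⟨S t, Nat.lt_succ_of_le (hSle t ht)⟩, ht, rfl⟩⟩
  · rintro i t ⟨ht, hti⟩ s ⟨hs, hsi⟩
    exact hg t ht s hs (hti.trans hsi.symm)

/-- The state of the unit `heaviside (β + t * α)`, negated when `α < 0` so that it is monotone in `t`. -/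
noncomputable def orientedStep (α β t : ℝ) : ℕ :=
  if (0 ≤ α ↔ 0 ≤ β + t * α) then 1 else 0

lemma orientedStep_le_one (α β t : ℝ) : orientedStep α β t ≤ 1 := by
  unfold orientedStep; split_ifs <;> omega

lemma monotone_orientedStep (α β : ℝ) : Monotone (orientedStep α β) := by
  intro t s hts
  unfold orientedStep
  split_ifs with ht hs <;> try omega
  rcases le_or_gt 0 α with hα | hα
  · exact absurd ((iff_of_true hα (by nlinarith [ht.1 hα]))) hs
  · exact absurd (iff_of_false hα.not_ge (by nlinarith [not_le.1 (mt ht.2 hα.not_ge)])) hs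

lemma heaviside_eq_of_orientedStep_eq {α β t s : ℝ} (h : orientedStep α β t = orientedStep α β s) :
    heaviside (β + t * α) = heaviside (β + s * α) := by
  unfold orientedStep at h
  unfold heaviside
  split_ifs at h ⊢ <;> first | rfl | omega | tauto

lemma orientedStep_eq_of_sum_eq {ι : Type*} (I : Finset ι) (α β : ι → ℝ) {t s : ℝ}
    (h : ∑ j ∈ I, orientedStep (α j) (β j) t = ∑ j ∈ I, orientedStep (α j) (β j) s) :
    ∀ j ∈ I, orientedStep (α j) (β j) t = orientedStep (α j) (β j) s := by
  rcases le_total t s with hts | hst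
  · exact (Finset.sum_eq_sum_iff_of_le fun j _ => monotone_orientedStep _ _ hts).1 h
  · exact fun j hj => ((Finset.sum_eq_sum_iff_of_le fun j _ =>
      monotone_orientedStep _ _ hst).1 h.symm j hj).symm

lemma dhnHidden_one_lineMap (p : ℕ → ℕ) (W : ∀ ℓ : ℕ, Matrix (Fin (p (ℓ + 1))) (Fin (p ℓ)) ℝ)
    (b : ∀ ℓ : ℕ, Fin (p (ℓ + 1)) → ℝ) (x₁ x₂ : Fin (p 0) → ℝ) (t : ℝ) (j : Fin (p 1)) :
    dhnHidden p W b 1 ((1 - t) • x₁ + t • x₂) j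
      = heaviside ((W 0 *ᵥ x₁ - b 0) j + t * (W 0 *ᵥ (x₂ - x₁)) j) := by
  simp only [dhnHidden, mulVec_add, mulVec_smul, mulVec_sub, Pi.add_apply, Pi.sub_apply,
    Pi.smul_apply, smul_eq_mul]
  ring_nf

lemma dhnHidden_eq_of_dhnHidden_one_eq (p : ℕ → ℕ)
    (W : ∀ ℓ : ℕ, Matrix (Fin (p (ℓ + 1))) (Fin (p ℓ)) ℝ) (b : ∀ ℓ : ℕ, Fin (p (ℓ + 1)) → ℝ)
    {x y : Fin (p 0) → ℝ} (h : dhnHidden p W b 1 x = dhnHidden p W b 1 y) {L : ℕ} (hL : 1 ≤ L) :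
    dhnHidden p W b L x = dhnHidden p W b L y := by
  induction L, hL using Nat.le_induction with
  | base => exact h
  | succ n _ ih => simp only [dhnHidden, ih]

theorem dhn_restriction_piecewise_constant_general (L : ℕ) (hL : 1 ≤ L)
    (p : ℕ → ℕ)
    (W : ∀ ℓ : ℕ, Matrix (Fin (p (ℓ + 1))) (Fin (p ℓ)) ℝ)
    (b : ∀ ℓ : ℕ, Fin (p (ℓ + 1)) → ℝ)
    (w : Fin (p L) → ℝ) (c : ℝ)
    (f : (Fin (p 0) → ℝ) → ℝ)
    (hf : ∀ x, f x = (∑ j, w j * dhnHidden p W b L x j) - c)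
    (x₁ x₂ : Fin (p 0) → ℝ) :
    PiecewiseConstOn (fun t : ℝ => f ((1 - t) • x₁ + t • x₂)) (p 1 + 1) := by
  set α := W 0 *ᵥ (x₂ - x₁)
  set β := W 0 *ᵥ x₁ - b 0
  let S : ℝ → ℕ := fun t => ∑ j, orientedStep (α j) (β j) t
  have hS : Monotone S := fun t s hts =>
    Finset.sum_le_sum fun j _ => monotone_orientedStep _ _ hts
  have hSle (t : ℝ) : S t ≤ p 1 := by
    simpa using Finset.sum_le_sum fun j (_ : j ∈ Finset.univ) => orientedStep_le_one (α j) (β j) t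
  refine PiecewiseConstOn.of_monotoneOn S (hS.monotoneOn _) (fun t _ => hSle t) ?_
  intro t _ s _ hts
  have hlayer1 : dhnHidden p W b 1 ((1 - t) • x₁ + t • x₂)
      = dhnHidden p W b 1 ((1 - s) • x₁ + s • x₂) := by
    funext j
    rw [dhnHidden_one_lineMap, dhnHidden_one_lineMap]
    exact heaviside_eq_of_orientedStep_eq
      (orientedStep_eq_of_sum_eq Finset.univ α β hts j (Finset.mem_univ j))
  simp only [hf, dhnHidden_eq_of_dhnHidden_one_eq p W b hlayer1 hL]

/-- The restriction of a deep Heaviside network to a segment is piecewise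
constant with at most `p 1 + 1` pieces. -/
theorem dhn_restriction_piecewise_constant (L : ℕ) (hL : 1 ≤ L)
    (p : ℕ → ℕ) (hd : 1 ≤ p 0)
    (W : ∀ ℓ : ℕ, Matrix (Fin (p (ℓ + 1))) (Fin (p ℓ)) ℝ)
    (b : ∀ ℓ : ℕ, Fin (p (ℓ + 1)) → ℝ)
    (w : Fin (p L) → ℝ) (c : ℝ)
    (f : (Fin (p 0) → ℝ) → ℝ)
    (hf : ∀ x, f x = (∑ j, w j * dhnHidden p W b L x j) - c)
    (x₁ x₂ : Fin (p 0) → ℝ)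
    (hx₁ : x₁ ∈ Set.Icc (0 : Fin (p 0) → ℝ) 1)
    (hx₂ : x₂ ∈ Set.Icc (0 : Fin (p 0) → ℝ) 1) :
    PiecewiseConstOn (fun t : ℝ => f ((1 - t) • x₁ + t • x₂)) (p 1 + 1) :=
  dhn_restriction_piecewise_constant_general L hL p W b w c f hf x₁ x₂
end

section
/- Suppose m, w, t are real numbers with m ≥ w ≥ t ≥ 0 and r ≥ 16 satisfies 2^m ≤ 2^t·(m r / w)^w. Then m ≤ t + w·log₂(2 r log₂ r). -/
/-!
With `u = (m - t) / w` and `L = log₂ r`, taking logarithms and using `m / w ≤ u + 1` turns the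
hypothesis into `u ≤ L + log₂ (u + 1)`. Since `u - log₂ (u + 1)` grows almost linearly, this
forces `u ≤ L + log₂ (2 L)`: otherwise `s = u - L > 3` would satisfy both `2 ^ s ≤ s + L + 1`
and `2 L < 2 ^ s`, hence `2 ^ (s - 1) < s + 1`, which is false for `s ≥ 3`.
-/

open Real

-- Bernoulli's inequality for the exponent `p / 2`, squared.
lemma add_two_le_two_rpow {p : ℝ} (hp : 2 ≤ p) : p + 2 ≤ (2 : ℝ) ^ p := by
  have bernoulli := one_add_mul_self_le_rpow_one_add (s := 1) (by norm_num) (p := p / 2)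
    (by linarith)
  have hsq : (2 : ℝ) ^ p = ((2 : ℝ) ^ (p / 2)) ^ 2 := by
    rw [← rpow_natCast, ← rpow_mul zero_le_two]
    ring_nf
  norm_num at bernoulli
  nlinarith

lemma le_add_mul_logb_of_rpow_le {b m t w x : ℝ} (hb : 1 < b) (hx : 0 < x)
    (h : b ^ m ≤ b ^ t * x ^ w) : m ≤ t + w * logb b x := by
  have hb0 : 0 < b := zero_lt_one.trans hb
  rwa [← rpow_logb hb0 hb.ne' hx, ← rpow_mul hb0.le, ← rpow_add hb0, mul_comm (logb b x),
    rpow_le_rpow_left_iff hb] at h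

lemma le_add_logb_two_mul_of_le_add_logb_add_one {u L : ℝ} (hL : 4 ≤ L)
    (h : u ≤ L + logb 2 (u + 1)) : u ≤ L + logb 2 (2 * L) := by
  by_contra! hc
  set s := u - L
  have hs : 3 ≤ s := by
    have : 3 ≤ logb 2 (2 * L) :=
      (le_logb_iff_rpow_le one_lt_two (by linarith)).2 (by norm_num; linarith)
    linarith
  have h2L : 2 * L < 2 ^ s := (logb_lt_iff_lt_rpow one_lt_two (by linarith)).1 (by linarith)
  have hsu : (2 : ℝ) ^ s ≤ u + 1 :=
    (le_logb_iff_rpow_le one_lt_two (by linarith)).1 (by linarith)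
  have hpow := add_two_le_two_rpow (p := s - 1) (by linarith)
  rw [rpow_sub_one two_ne_zero] at hpow
  linarith

/-- Technical inequality: if `2^m ≤ 2^t·(mr/w)^w` with `m ≥ w ≥ t ≥ 0` and
`r ≥ 16`, then `m ≤ t + w·log₂(2r·log₂ r)`. -/
theorem growth_to_vc_inequality (m w t r : ℝ)
    (ht : 0 ≤ t) (htw : t ≤ w) (hwm : w ≤ m) (hr : 16 ≤ r)
    (h : (2 : ℝ) ^ m ≤ 2 ^ t * (m * r / w) ^ w) :
    m ≤ t + w * Real.logb 2 (2 * r * Real.logb 2 r) := by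
  rcases (ht.trans htw).eq_or_lt with rfl | hw
  · simpa using (rpow_le_rpow_left_iff one_lt_two).1 (by simpa using h)
  have hm : 0 < m := hw.trans_le hwm
  have hr0 : 0 < r := by linarith
  have hlog := le_add_mul_logb_of_rpow_le one_lt_two (by positivity) h
  set L := logb 2 r
  have hL : 4 ≤ L := (le_logb_iff_rpow_le one_lt_two hr0).2 (by norm_num; linarith)
  have hu : (m - t) / w ≤ L + logb 2 ((m - t) / w + 1) :=
    calc (m - t) / w ≤ logb 2 (m * r / w) := by rw [div_le_iff₀ hw]; linarith
      _ = L + logb 2 (m / w) := by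
        rw [mul_div_right_comm, logb_mul (by positivity) hr0.ne', add_comm]
      _ ≤ L + logb 2 ((m - t) / w + 1) := by
        gcongr L + logb 2 ?_
        · exact one_lt_two
        rw [div_add_one hw.ne']
        gcongr
        linarith
  have key := le_add_logb_two_mul_of_le_add_logb_add_one hL hu
  rw [div_le_iff₀ hw] at key
  rw [mul_comm 2 r, mul_assoc, logb_mul hr0.ne' (by positivity)]
  linarith
end
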